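/- Let (A, {,}, ∙) be a Poisson superalgebra, (V, {,}_1, ∙1, ψ_{,}, ψ_∙) an A-module Poisson superalgebra, and T: V → A an O-operator of weight λ. Define on V: [u,v] = λ{u,v}_1, u⋄v = ψ_{,}(T(u))v, u·v = λ u∙1v, u≻v = ψ_∙(T(u))v. Then (V, [·,·], ⋄, ·, ≻) is a post-Poisson superalgebra, and T is a homomorphism of Poisson superalgebras from the associated Poisson superalgebra P(V) to (A, {,}, ∙). -/
import Mathlib


/-- The Koszul sign `(-1)^{ij}` for parities `i j : ZMod 2`. -/
def sgn (K : Type) [Field K] (i j : ZMod 2) : K := (-1 : K) ^ (i.val * j.val)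

/-- Poisson superalgebra axioms for bundled bilinear operations. -/
def PoissonAxB {K A : Type} [Field K] [AddCommGroup A] [Module K A]
    (𝒜 : ZMod 2 → Submodule K A) (br mu : A →ₗ[K] A →ₗ[K] A) : Prop :=
  (∀ i j, ∀ x ∈ 𝒜 i, ∀ y ∈ 𝒜 j, br x y ∈ 𝒜 (i+j)) ∧
  (∀ i j, ∀ x ∈ 𝒜 i, ∀ y ∈ 𝒜 j, mu x y ∈ 𝒜 (i+j)) ∧
  (∀ i j, ∀ x ∈ 𝒜 i, ∀ y ∈ 𝒜 j, br x y = - (sgn K i j) • br y x) ∧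
  (∀ i j k, ∀ x ∈ 𝒜 i, ∀ y ∈ 𝒜 j, ∀ z ∈ 𝒜 k,
    sgn K i k • br x (br y z) + sgn K k j • br z (br x y)
      + sgn K j i • br y (br z x) = 0) ∧
  (∀ i j, ∀ x ∈ 𝒜 i, ∀ y ∈ 𝒜 j, mu x y = sgn K i j • mu y x) ∧
  (∀ x y z : A, mu (mu x y) z = mu x (mu y z)) ∧
  (∀ i j, ∀ x ∈ 𝒜 i, ∀ y ∈ 𝒜 j, ∀ z : A,
    br x (mu y z) = mu (br x y) z + sgn K i j • mu y (br x z))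

/-- Axioms of a (left) post-Poisson superalgebra with operations
`lb = [·,·]`, `dm = ⋄`, `cd = ·`, `sc = ≻`. -/
def PostPoissonAx {K A : Type} [Field K] [AddCommGroup A] [Module K A]
    (𝒜 : ZMod 2 → Submodule K A) (lb dm cd sc : A → A → A) : Prop :=
  (∀ i j, ∀ x ∈ 𝒜 i, ∀ y ∈ 𝒜 j, lb x y = - (sgn K i j) • lb y x) ∧
  (∀ i j k, ∀ x ∈ 𝒜 i, ∀ y ∈ 𝒜 j, ∀ z ∈ 𝒜 k,
    sgn K i k • lb x (lb y z) + sgn K k j • lb z (lb x y)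
      + sgn K j i • lb y (lb z x) = 0) ∧
  (∀ i j k, ∀ x ∈ 𝒜 i, ∀ y ∈ 𝒜 j, ∀ z ∈ 𝒜 k,
    sgn K k j • dm z (dm y x) - dm y (dm z x) + dm (dm y z) x
      - sgn K k j • dm (dm z y) x + dm (lb y z) x = 0) ∧
  (∀ i j k, ∀ x ∈ 𝒜 i, ∀ y ∈ 𝒜 j, ∀ z ∈ 𝒜 k,
    dm z (lb x y) = lb (dm z x) y + sgn K k i • lb x (dm z y)) ∧
  (∀ i j, ∀ x ∈ 𝒜 i, ∀ y ∈ 𝒜 j, cd x y = sgn K i j • cd y x) ∧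
  (∀ x y z : A, cd (cd x y) z = cd x (cd y z)) ∧
  (∀ i j, ∀ x ∈ 𝒜 i, ∀ y ∈ 𝒜 j, ∀ z : A,
    sc x (sc y z) = sc (sc x y + sgn K i j • sc y x + cd x y) z) ∧
  (∀ x y z : A, cd (sc x y) z = sc x (cd y z)) ∧
  (∀ i j, ∀ x ∈ 𝒜 i, ∀ y ∈ 𝒜 j, ∀ z : A,
    lb x (cd y z) = cd (lb x y) z + sgn K i j • cd y (lb x z)) ∧
  (∀ i j k, ∀ x ∈ 𝒜 i, ∀ y ∈ 𝒜 j, ∀ z ∈ 𝒜 k,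
    lb x (sc z y) = sgn K i k • sc z (lb x y)
      - (sgn K j k * sgn K i j * sgn K i k) • cd y (dm z x)) ∧
  (∀ i j, ∀ x ∈ 𝒜 i, ∀ y ∈ 𝒜 j, ∀ z : A,
    dm x (cd y z) = cd (dm x y) z + sgn K i j • cd y (dm x z)) ∧
  (∀ i j k, ∀ x ∈ 𝒜 i, ∀ y ∈ 𝒜 j, ∀ z ∈ 𝒜 k,
    dm (sc y z + sgn K j k • sc z y + cd y z) x
      = sgn K j k • sc z (dm y x) + sc y (dm z x)) ∧
  (∀ i j k, ∀ x ∈ 𝒜 i, ∀ y ∈ 𝒜 j, ∀ z ∈ 𝒜 k,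
    dm x (sc z y) = sgn K i k • sc z (dm x y)
      + sc (dm x z - sgn K i k • dm z x + lb x z) y)

lemma zmod2 (i : ZMod 2) : i = 0 ∨ i = 1 := by revert i; decide

lemma sgn_comm (K : Type) [Field K] (i j : ZMod 2) : sgn K i j = sgn K j i := by
  rw [sgn, sgn, Nat.mul_comm]

lemma sgn_sq (K : Type) [Field K] (i j : ZMod 2) : sgn K i j * sgn K i j = 1 := by
  rw [sgn, ← pow_add, ← two_mul, pow_mul]; norm_num

lemma sgn_zero_left (K : Type) [Field K] (j : ZMod 2) : sgn K 0 j = 1 := by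
  simp [sgn, (by decide : ZMod.val (0 : ZMod 2) = 0)]

lemma sgn_zero_right (K : Type) [Field K] (i : ZMod 2) : sgn K i 0 = 1 := by
  simp [sgn, (by decide : ZMod.val (0 : ZMod 2) = 0)]

lemma sgn_one_one (K : Type) [Field K] : sgn K 1 1 = -1 := by
  simp [sgn, (by decide : ZMod.val (1 : ZMod 2) = 1)]

/-- an `O`-operator `T : V → A` of weight `λ` on an `A`-module
Poisson superalgebra `V` induces a post-Poisson superalgebra structure on `V`,
and `T` is a homomorphism from the associated Poisson superalgebra `P(V)`
to `(A, {,}, ∙)`. -/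
theorem stmt_13 {K A V : Type} [Field K] [CharZero K]
    [AddCommGroup A] [Module K A] [AddCommGroup V] [Module K V]
    (𝒜 : ZMod 2 → Submodule K A) (𝒱 : ZMod 2 → Submodule K V)
    (br mu : A →ₗ[K] A →ₗ[K] A) (br1 mu1 : V →ₗ[K] V →ₗ[K] V)
    (ψL ψB : A →ₗ[K] V →ₗ[K] V)
    -- (A, br, mu) and (V, br1, mu1) are Poisson superalgebras
    (hA : PoissonAxB 𝒜 br mu) (hV : PoissonAxB 𝒱 br1 mu1)
    -- (V, br1, mu1, ψL, ψB) is an A-module Poisson superalgebra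
    (hψLeven : ∀ i j, ∀ x ∈ 𝒜 i, ∀ v ∈ 𝒱 j, ψL x v ∈ 𝒱 (i+j))
    (hψBeven : ∀ i j, ∀ x ∈ 𝒜 i, ∀ v ∈ 𝒱 j, ψB x v ∈ 𝒱 (i+j))
    (hψLrep : ∀ i j, ∀ x ∈ 𝒜 i, ∀ y ∈ 𝒜 j, ∀ v : V,
      ψL (br x y) v = ψL x (ψL y v) - sgn K i j • ψL y (ψL x v))
    (hψLder : ∀ i j, ∀ x ∈ 𝒜 i, ∀ u ∈ 𝒱 j, ∀ v : V,
      ψL x (br1 u v) = br1 (ψL x u) v + sgn K i j • br1 u (ψL x v))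
    (hψBrep : ∀ x y : A, ∀ v : V, ψB (mu x y) v = ψB x (ψB y v))
    (hψBmod : ∀ x : A, ∀ u v : V, ψB x (mu1 u v) = mu1 (ψB x u) v)
    (hcompat1 : ∀ i j, ∀ x ∈ 𝒜 i, ∀ y ∈ 𝒜 j, ∀ v : V,
      ψL (mu x y) v = ψB x (ψL y v) + sgn K i j • ψB y (ψL x v))
    (hcompat2 : ∀ i j, ∀ x ∈ 𝒜 i, ∀ y ∈ 𝒜 j, ∀ v : V,
      ψB (br x y) v = ψL x (ψB y v) - sgn K i j • ψB y (ψL x v))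
    (hextra1 : ∀ i j, ∀ x ∈ 𝒜 i, ∀ u ∈ 𝒱 j, ∀ v : V,
      ψL x (mu1 u v) = mu1 (ψL x u) v + sgn K i j • mu1 u (ψL x v))
    (hextra2 : ∀ i j, ∀ x ∈ 𝒜 i, ∀ u ∈ 𝒱 j, ∀ v : V,
      ψB x (br1 u v) = mu1 (ψL x u) v + sgn K i j • br1 u (ψB x v))
    -- T is an even O-operator of weight λ
    (lam : K) (T : V →ₗ[K] A)
    (hTeven : ∀ i, ∀ v ∈ 𝒱 i, T v ∈ 𝒜 i)
    (hO1 : ∀ i j, ∀ u ∈ 𝒱 i, ∀ v ∈ 𝒱 j,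
      br (T u) (T v) = T (ψL (T u) v - sgn K i j • ψL (T v) u + lam • br1 u v))
    (hO2 : ∀ i j, ∀ u ∈ 𝒱 i, ∀ v ∈ 𝒱 j,
      mu (T u) (T v) = T (ψB (T u) v + sgn K i j • ψB (T v) u + lam • mu1 u v)) :
    -- conclusion: V becomes a post-Poisson superalgebra and T is a homomorphism
    -- of Poisson superalgebras from P(V) to (A, br, mu)
    PostPoissonAx 𝒱 (fun u v => lam • br1 u v) (fun u v => ψL (T u) v)
      (fun u v => lam • mu1 u v) (fun u v => ψB (T u) v) ∧
    (∀ i j, ∀ u ∈ 𝒱 i, ∀ v ∈ 𝒱 j,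
      T (ψL (T u) v - sgn K i j • ψL (T v) u + lam • br1 u v) = br (T u) (T v)) ∧
    (∀ i j, ∀ u ∈ 𝒱 i, ∀ v ∈ 𝒱 j,
      T (ψB (T u) v + sgn K i j • ψB (T v) u + lam • mu1 u v) = mu (T u) (T v)) := by
  
  obtain ⟨-, -, hVanti, hVjac, hVcomm, hVassoc, hVleib⟩ := hV
  refine ⟨⟨?_, ?_, ?_, ?_, ?_, ?_, ?_, ?_, ?_, ?_, ?_, ?_, ?_⟩,
    fun i j u hu v hv => (hO1 i j u hu v hv).symm,
    fun i j u hu v hv => (hO2 i j u hu v hv).symm⟩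
  · -- ax1: antisymmetry of lb
    intro i j x hx y hy
    beta_reduce
    rw [hVanti i j x hx y hy]
    module
  · -- ax2: super Jacobi
    intro i j k x hx y hy z hz
    have h := hVjac i j k x hx y hy z hz
    beta_reduce
    simp only [map_smul, LinearMap.smul_apply]
    linear_combination (norm := module) (lam * lam) • h
  · -- ax3
    intro i j k x hx y hy z hz
    have h1 := hψLrep j k (T y) (hTeven j y hy) (T z) (hTeven k z hz) x
    rw [hO1 j k y hy z hz] at h1
    beta_reduce
    rw [sgn_comm K k j]
    simp only [map_sub, map_add, map_smul, LinearMap.sub_apply, LinearMap.add_apply,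
      LinearMap.smul_apply] at h1 ⊢
    linear_combination (norm := module) h1
  · -- ax4
    intro i j k x hx y hy z hz
    have h := hψLder k i (T z) (hTeven k z hz) x hx y
    beta_reduce
    simp only [map_smul, LinearMap.smul_apply]
    linear_combination (norm := module) lam • h
  · -- ax5: commutativity of cd
    intro i j x hx y hy
    beta_reduce
    rw [hVcomm i j x hx y hy]
    module
  · -- ax6: associativity of cd
    intro x y z
    beta_reduce
    simp only [map_smul, LinearMap.smul_apply]
    linear_combination (norm := module) (lam * lam) • hVassoc x y z
  · -- ax7
    intro i j x hx y hy z
    have h := hψBrep (T x) (T y) z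
    rw [hO2 i j x hx y hy] at h
    beta_reduce
    exact h.symm
  · -- ax8
    intro x y z
    beta_reduce
    rw [map_smul, hψBmod]
  · -- ax9
    intro i j x hx y hy z
    beta_reduce
    simp only [map_smul, LinearMap.smul_apply]
    linear_combination (norm := module) (lam * lam) • hVleib i j x hx y hy z
  · -- ax10
    intro i j k x hx y hy z hz
    have h1 := hextra2 k i (T z) (hTeven k z hz) x hx y
    have h2 := hVcomm j (k + i) y hy (ψL (T z) x) (hψLeven k i (T z) (hTeven k z hz) x hx)
    beta_reduce
    rcases zmod2 i with rfl | rfl <;> rcases zmod2 j with rfl | rfl <;>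
      rcases zmod2 k with rfl | rfl <;>
      simp only [(by decide : (1 + 1 : ZMod 2) = 0), add_zero, zero_add, sgn_zero_left,
        sgn_zero_right, sgn_one_one, one_smul, neg_smul, neg_neg, one_mul, mul_one,
        neg_mul, mul_neg, map_smul, LinearMap.smul_apply, map_neg, LinearMap.neg_apply] at h1 h2 ⊢ <;>
      first
        | linear_combination (norm := module) lam • h1 + lam • h2
        | linear_combination (norm := module) lam • h1 - lam • h2
        | linear_combination (norm := module) (-lam) • h1 + lam • h2
        | linear_combination (norm := module) (-lam) • h1 - lam • h2
  · -- ax11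
    intro i j x hx y hy z
    have h := hextra1 i j (T x) (hTeven i x hx) y hy z
    beta_reduce
    simp only [map_smul, LinearMap.smul_apply]
    linear_combination (norm := module) lam • h
  · -- ax12
    intro i j k x hx y hy z hz
    have h := hcompat1 j k (T y) (hTeven j y hy) (T z) (hTeven k z hz) x
    rw [hO2 j k y hy z hz] at h
    beta_reduce
    linear_combination (norm := module) h
  · -- ax13
    intro i j k x hx y hy z hz
    have h := hcompat2 i k (T x) (hTeven i x hx) (T z) (hTeven k z hz) y
    rw [hO1 i k x hx z hz] at h
    beta_reduce
    first
      | linear_combination (norm := module) h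
      | linear_combination (norm := module) (-1 : K) • h
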